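/- arXiv:1908.09318 — 3 statements merged into one kernel-verified Lean document; each statement's English description precedes it below -/
import Mathlib

section
/- Let ⟨G, τ, W⟩ be a path story with G a path on n vertices, let h = ⌈n/W⌉, and let B_1, …, B_h be its buckets. Define the x-buckets by B^x_1 = B_1 and B^x_i = B_{2i−2} ∪ B_{2i−1} for i = 2, …, ⌈(h+1)/2⌉, and the y-buckets by B^y_j = B_{2j−1} ∪ B_{2j} for j = 1, …, ⌈h/2⌉ (undefined buckets being empty). Then there exists a map φ from the vertices of G to the integer grid [1,2W] × [1,2W] such that, for every x-bucket B^x_i and every y-bucket B^y_j, the restriction of φ to B^x_i (respectively B^y_j) is injective and is a planar straight-line drawing of the subgraph of G induced by B^x_i (respectively B^y_j). -/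
/-- `φ` restricted to the vertex set `S` is a planar straight-line drawing of the
subgraph of `G` induced by `S`. -/
def IsPlanarDrawingOn {V : Type} (G : SimpleGraph V) (S : Set V) (φ : V → ℝ × ℝ) : Prop :=
  Set.InjOn φ S ∧
  (∀ u v w, u ∈ S → v ∈ S → w ∈ S → G.Adj u v → w ≠ u → w ≠ v →
    φ w ∉ segment ℝ (φ u) (φ v)) ∧
  (∀ u v x y, u ∈ S → v ∈ S → x ∈ S → y ∈ S → G.Adj u v → G.Adj x y →
    u ≠ x → u ≠ y → v ≠ x → v ≠ y →
    segment ℝ (φ u) (φ v) ∩ segment ℝ (φ x) (φ y) = ∅) ∧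
  (∀ u v w, u ∈ S → v ∈ S → w ∈ S → G.Adj u v → G.Adj u w → v ≠ w →
    segment ℝ (φ u) (φ v) ∩ segment ℝ (φ u) (φ w) = {φ u})

/-- The `i`-th bucket `B_i = {v : (i-1)W + 1 ≤ τ(v) ≤ min (iW) n}` of a graph story
on `n` vertices with labeling `τ` (vertex `v` has label `(τ v).val + 1 ∈ {1, …, n}`)
and window size `W`.  For `i` out of range this set is empty. -/
def bucket {n : ℕ} (τ : Fin n ≃ Fin n) (W i : ℕ) : Set (Fin n) :=
  {v | (i - 1) * W + 1 ≤ (τ v).val + 1 ∧ (τ v).val + 1 ≤ min (i * W) n}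

/-- The `i`-th x-bucket: `B^x_1 = B_1` and `B^x_i = B_{2i-2} ∪ B_{2i-1}` for `i ≥ 2`. -/
def xBucket {n : ℕ} (τ : Fin n ≃ Fin n) (W i : ℕ) : Set (Fin n) :=
  if i = 1 then bucket τ W 1 else bucket τ W (2 * i - 2) ∪ bucket τ W (2 * i - 1)

/-- The `j`-th y-bucket: `B^y_j = B_{2j-1} ∪ B_{2j}`. -/
def yBucket {n : ℕ} (τ : Fin n ≃ Fin n) (W j : ℕ) : Set (Fin n) :=
  bucket τ W (2 * j - 1) ∪ bucket τ W (2 * j)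

/-- The point `p` is a grid point of the integer grid `[a,b] × [c,d]`. -/
def onGrid (a b c d : ℤ) (p : ℝ × ℝ) : Prop :=
  ∃ x y : ℤ, p = ((x : ℝ), (y : ℝ)) ∧ a ≤ x ∧ x ≤ b ∧ c ≤ y ∧ y ≤ d

/-!
Put each vertex at `(1 + its rank in its x-bucket, 1 + its rank in its y-bucket)`, ranks taken
along the path. The x-buckets are the fibres of the label map `t ↦ (t + W) / 2W` and the y-buckets
those of `t ↦ t / 2W`, so each holds at most `2W` vertices and the ranks stay in `[1, 2W]`.
On an x-bucket the drawing is strictly x-monotone along the path, and an x-monotone straight-line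
drawing of (any subset of) a path is planar: projecting to the x-axis sends every edge onto an
interval, and the intervals of two edges without a common endpoint are disjoint, since the path
order separates them. The y-buckets are handled in the same way with the y-axis.
-/

open Finset Function
open scoped Interval

section Segment

variable {𝕜 E : Type*} [Field 𝕜] [LinearOrder 𝕜] [IsStrictOrderedRing 𝕜]
  [AddCommGroup E] [Module 𝕜 E]

lemma LinearMap.mem_uIcc_of_mem_segment (f : E →ₗ[𝕜] 𝕜) {a b p : E} (hp : p ∈ segment 𝕜 a b) :
    f p ∈ [[f a, f b]] := by
  rw [← segment_eq_uIcc]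
  exact image_segment 𝕜 f.toAffineMap a b ▸ Set.mem_image_of_mem f hp

lemma LinearMap.injOn_segment (f : E →ₗ[𝕜] 𝕜) {a b : E} (hab : f a ≠ f b) :
    Set.InjOn f (segment 𝕜 a b) := by
  rw [segment_eq_image_lineMap]
  rintro _ ⟨s, -, rfl⟩ _ ⟨t, -, rfl⟩ h
  simp only [AffineMap.lineMap_apply_module, map_add, map_smul, smul_eq_mul] at h
  have hst : (s - t) * (f b - f a) = 0 := by linear_combination h
  rw [sub_eq_zero.mp ((mul_eq_zero.mp hst).resolve_right (sub_ne_zero.mpr hab.symm))]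

end Segment

section FiberRank

variable {α κ : Type*} [Fintype α] [LinearOrder α] [DecidableEq κ] (c : α → κ)

def fiberRank (v : α) : ℕ := #{w | c w = c v ∧ w < v}

lemma fiberRank_lt_card_fiber (v : α) : fiberRank c v < #{w | c w = c v} := by
  refine card_lt_card ⟨monotone_filter_right _ fun w _ hw => hw.1, fun h => ?_⟩
  simpa using h (mem_filter.mpr ⟨mem_univ v, rfl⟩)

lemma fiberRank_strictMonoOn (k : κ) : StrictMonoOn (fiberRank c) {v | c v = k} := by
  intro u (hu : c u = k) v (hv : c v = k) huv
  refine card_lt_card ⟨monotone_filter_right _ fun w _ hw => ⟨?_, hw.2.trans huv⟩, fun h => ?_⟩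
  · rw [hw.1, hu, hv]
  · simpa using h (mem_filter.mpr ⟨mem_univ u, ⟨hu.trans hv.symm, huv⟩⟩)

end FiberRank

lemma card_filter_div_eq_le {α : Type*} [Fintype α] {ι : α → ℕ} (hι : Injective ι) {m : ℕ}
    (hm : 0 < m) (k : ℕ) : #{v | ι v / m = k} ≤ m := by
  calc #{v | ι v / m = k} ≤ #(Ico (k * m) (k * m + m)) := by
        refine card_le_card_of_injOn ι (fun v hv => ?_) hι.injOn
        have := (Nat.div_eq_iff hm).mp (mem_filter.mp hv).2
        simp only [coe_Ico, Set.mem_Ico]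
        omega
    _ = m := by simp

namespace SimpleGraph

variable {n : ℕ} {u v w x y : Fin n}

lemma pathGraph_adj_lt_or_gt (h : (pathGraph n).Adj u v) (hwu : w ≠ u) (hwv : w ≠ v) :
    (w < u ∧ w < v) ∨ (u < w ∧ v < w) := by
  rw [pathGraph_adj] at h
  rw [Ne, Fin.ext_iff] at hwu hwv
  simp only [Fin.lt_def]
  omega

lemma pathGraph_adj_lt_or_gt_of_ne (h : (pathGraph n).Adj u v) (h' : (pathGraph n).Adj x y)
    (hux : u ≠ x) (huy : u ≠ y) (hvx : v ≠ x) (hvy : v ≠ y) :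
    (u < x ∧ u < y ∧ v < x ∧ v < y) ∨ (x < u ∧ x < v ∧ y < u ∧ y < v) := by
  rw [pathGraph_adj] at h h'
  rw [Ne, Fin.ext_iff] at hux huy hvx hvy
  simp only [Fin.lt_def]
  omega

lemma pathGraph_adj_adj_lt_and_lt (h : (pathGraph n).Adj u v) (h' : (pathGraph n).Adj u w)
    (hvw : v ≠ w) : (v < u ∧ u < w) ∨ (w < u ∧ u < v) := by
  rw [pathGraph_adj] at h h'
  rw [Ne, Fin.ext_iff] at hvw
  simp only [Fin.lt_def]
  omega

end SimpleGraph

lemma Set.uIcc_inter_uIcc_eq_empty {α : Type*} [LinearOrder α] {a b c d : α} (hac : a < c)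
    (had : a < d) (hbc : b < c) (hbd : b < d) : [[a, b]] ∩ [[c, d]] = ∅ :=
  Set.eq_empty_of_forall_notMem fun _ ⟨h, h'⟩ =>
    (h.2.trans_lt (sup_lt_iff.2 ⟨lt_inf_iff.2 ⟨hac, had⟩, lt_inf_iff.2 ⟨hbc, hbd⟩⟩)).not_ge h'.1

open SimpleGraph in
theorem isPlanarDrawingOn_pathGraph_of_strictMonoOn {n : ℕ} {S : Set (Fin n)}
    {φ : Fin n → ℝ × ℝ} (f : (ℝ × ℝ) →ₗ[ℝ] ℝ) (hf : StrictMonoOn (f ∘ φ) S) :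
    IsPlanarDrawingOn (pathGraph n) S φ := by
  have seg_inter_subset : ∀ a b c d, segment ℝ (φ a) (φ b) ∩ segment ℝ (φ c) (φ d) ⊆
      f ⁻¹' ([[(f ∘ φ) a, (f ∘ φ) b]] ∩ [[(f ∘ φ) c, (f ∘ φ) d]]) := fun a b c d p ⟨hp, hp'⟩ =>
    ⟨f.mem_uIcc_of_mem_segment hp, f.mem_uIcc_of_mem_segment hp'⟩
  refine ⟨hf.injOn.of_comp, ?_, ?_, ?_⟩
  · intro u v w hu hv hw huv hwu hwv hmem
    have hw_mem := f.mem_uIcc_of_mem_segment hmem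
    rcases pathGraph_adj_lt_or_gt huv hwu hwv with ⟨h1, h2⟩ | ⟨h1, h2⟩
    · exact Set.notMem_uIcc_of_lt (hf hw hu h1) (hf hw hv h2) hw_mem
    · exact Set.notMem_uIcc_of_gt (hf hu hw h1) (hf hv hw h2) hw_mem
  · intro u v x y hu hv hx hy huv hxy hux huy hvx hvy
    refine Set.subset_eq_empty (seg_inter_subset u v x y) ?_
    rcases pathGraph_adj_lt_or_gt_of_ne huv hxy hux huy hvx hvy with
      ⟨h1, h2, h3, h4⟩ | ⟨h1, h2, h3, h4⟩
    · rw [Set.uIcc_inter_uIcc_eq_empty (hf hu hx h1) (hf hu hy h2) (hf hv hx h3) (hf hv hy h4),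
        Set.preimage_empty]
    · rw [Set.inter_comm, Set.uIcc_inter_uIcc_eq_empty (hf hx hu h1) (hf hx hv h2)
        (hf hy hu h3) (hf hy hv h4), Set.preimage_empty]
  · intro u v w hu hv hw huv huw hvw
    have key : ∀ a b, a ∈ S → b ∈ S → a < u → u < b →
        segment ℝ (φ u) (φ a) ∩ segment ℝ (φ u) (φ b) = {φ u} := by
      intro a b ha hb hau hub
      have hlt := hf ha hu hau
      have hgt := hf hu hb hub
      refine Set.eq_singleton_iff_unique_mem.mpr
        ⟨⟨left_mem_segment ℝ _ _, left_mem_segment ℝ _ _⟩, fun p hp => ?_⟩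
      have hfp := seg_inter_subset u a u b hp
      rw [Set.uIcc_of_gt hlt, Set.uIcc_of_lt hgt, Set.Icc_inter_Icc_eq_singleton hlt.le hgt.le]
        at hfp
      exact f.injOn_segment hlt.ne' hp.1 (left_mem_segment ℝ _ _) hfp
    rcases pathGraph_adj_adj_lt_and_lt huv huw hvw with ⟨h1, h2⟩ | ⟨h1, h2⟩
    · exact key v w hv hw h1 h2
    · rw [Set.inter_comm]
      exact key w v hw hv h1 h2

section Buckets

variable {n W : ℕ} (τ : Fin n ≃ Fin n)

lemma mem_bucket_iff (hW : 0 < W) {i : ℕ} {v : Fin n} :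
    v ∈ bucket τ W i ↔ (τ v : ℕ) / W + 1 = i := by
  have hv := (τ v).isLt
  rcases i with _ | i
  · simp [bucket]
  · have := Nat.div_eq_iff hW (x := (τ v : ℕ)) (y := i)
    simp only [bucket, Set.mem_ofPred_eq, le_min_iff, Nat.add_sub_cancel, Nat.succ_mul]
    omega

lemma xBucket_eq (hW : 0 < W) {i : ℕ} (hi : 1 ≤ i) :
    xBucket τ W i = {v | ((τ v : ℕ) + W) / (2 * W) = i - 1} := by
  ext v
  have hdiv : ((τ v : ℕ) + W) / (2 * W) = ((τ v : ℕ) / W + 1) / 2 := by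
    rw [mul_comm, ← Nat.div_div_eq_div_mul, Nat.add_div_right _ hW]
  unfold xBucket
  -- `omega` would read `t / W` as an atom of unknown sign unless it is generalized to a variable
  split_ifs <;> simp only [Set.mem_union, mem_bucket_iff τ hW, Set.mem_ofPred_eq, hdiv] <;>
    generalize (τ v : ℕ) / W = q <;> omega

lemma yBucket_eq (hW : 0 < W) {j : ℕ} (hj : 1 ≤ j) :
    yBucket τ W j = {v | (τ v : ℕ) / (2 * W) = j - 1} := by
  ext v
  have hdiv : (τ v : ℕ) / (2 * W) = (τ v : ℕ) / W / 2 := by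
    rw [mul_comm, Nat.div_div_eq_div_mul]
  simp only [yBucket, Set.mem_union, mem_bucket_iff τ hW, Set.mem_ofPred_eq, hdiv]
  omega

end Buckets

section RankDrawing

variable {α κ : Type*} [Fintype α] [LinearOrder α] [DecidableEq κ] (cx cy : α → κ)

def rankDrawing (v : α) : ℝ × ℝ := ((fiberRank cx v + 1 : ℕ), (fiberRank cy v + 1 : ℕ))

lemma onGrid_rankDrawing {m : ℕ} (hx : ∀ k, #{v | cx v = k} ≤ m) (hy : ∀ k, #{v | cy v = k} ≤ m)
    (v : α) : onGrid 1 m 1 m (rankDrawing cx cy v) := by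
  have hx' := (fiberRank_lt_card_fiber cx v).trans_le (hx (cx v))
  have hy' := (fiberRank_lt_card_fiber cy v).trans_le (hy (cy v))
  exact ⟨fiberRank cx v + 1, fiberRank cy v + 1, by simp [rankDrawing], by omega, by omega,
    by omega, by omega⟩

end RankDrawing

section PathRankDrawing

variable {n : ℕ} {κ : Type*} [DecidableEq κ] (cx cy : Fin n → κ) (k : κ)

lemma isPlanarDrawingOn_rankDrawing_fiber_fst :
    IsPlanarDrawingOn (SimpleGraph.pathGraph n) {v | cx v = k} (rankDrawing cx cy) :=
  isPlanarDrawingOn_pathGraph_of_strictMonoOn (LinearMap.fst ℝ ℝ ℝ) <|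
    (Nat.strictMono_cast.comp (strictMono_id.add_const 1)).comp_strictMonoOn
      (fiberRank_strictMonoOn cx k)

lemma isPlanarDrawingOn_rankDrawing_fiber_snd :
    IsPlanarDrawingOn (SimpleGraph.pathGraph n) {v | cy v = k} (rankDrawing cx cy) :=
  isPlanarDrawingOn_pathGraph_of_strictMonoOn (LinearMap.snd ℝ ℝ ℝ) <|
    (Nat.strictMono_cast.comp (strictMono_id.add_const 1)).comp_strictMonoOn
      (fiberRank_strictMonoOn cy k)

end PathRankDrawing

/-- For every path story `⟨G, τ, W⟩` with `h = ⌈n/W⌉` buckets,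
there is a placement `φ` of the vertices on the `[1, 2W] × [1, 2W]` grid such that
the restriction of `φ` to each x-bucket `B^x_i`, `i = 1, …, ⌈(h+1)/2⌉`, and to each
y-bucket `B^y_j`, `j = 1, …, ⌈h/2⌉`, is injective and a planar straight-line drawing
of the subgraph of `G` induced by that bucket. -/
theorem path_story_bucket_drawings (n W : ℕ) (hW : 0 < W) (τ : Fin n ≃ Fin n) :
    ∃ φ : Fin n → ℝ × ℝ,
      (∀ v, onGrid 1 (2 * (W : ℤ)) 1 (2 * (W : ℤ)) (φ v)) ∧
      (∀ i, 1 ≤ i → i ≤ ((n + W - 1) / W + 2) / 2 →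
        IsPlanarDrawingOn (SimpleGraph.pathGraph n) (xBucket τ W i) φ) ∧
      (∀ j, 1 ≤ j → j ≤ ((n + W - 1) / W + 1) / 2 →
        IsPlanarDrawingOn (SimpleGraph.pathGraph n) (yBucket τ W j) φ) := by
  set cx : Fin n → ℕ := fun v => ((τ v : ℕ) + W) / (2 * W)
  set cy : Fin n → ℕ := fun v => (τ v : ℕ) / (2 * W)
  have hlabel : Injective fun v => (τ v : ℕ) := Fin.val_injective.comp τ.injective
  have h2W : 0 < 2 * W := by omega
  refine ⟨rankDrawing cx cy, fun v => ?_, fun i hi _ => ?_, fun j hj _ => ?_⟩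
  · exact_mod_cast onGrid_rankDrawing cx cy
      (card_filter_div_eq_le ((add_left_injective W).comp hlabel) h2W)
      (card_filter_div_eq_le hlabel h2W) v
  · rw [xBucket_eq τ hW hi]
    exact isPlanarDrawingOn_rankDrawing_fiber_fst cx cy (i - 1)
  · rw [yBucket_eq τ hW hj]
    exact isPlanarDrawingOn_rankDrawing_fiber_snd cx cy (j - 1)
end

section
/- Let F be a forest (an acyclic simple graph) on a finite vertex set V, and let b : V → ℤ be a labeling whose image is exactly {1, 2, …, h} for some h ≥ 1, such that every edge {u, v} of F satisfies |b(u) − b(v)| ≤ 1. Then edges can be added to F to obtain a tree (a connected acyclic simple graph) T on V, containing F as a subgraph, in which every edge {u, v} still satisfies |b(u) − b(v)| ≤ 1. -/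
/-!
Join two distinct vertices whenever their labels differ by at most one. Because the labels
fill an interval of integers, this graph is connected: walking up one label at a time links
any two vertices. The forest `F` is an acyclic subgraph of it, so it extends to a spanning
tree of this graph, and every edge of that tree joins labels differing by at most one.
-/

open SimpleGraph

namespace SimpleGraph

variable {V : Type*} {b : V → ℤ}

def labelGraph (b : V → ℤ) : SimpleGraph V :=
  fromRel fun u v => |b u - b v| ≤ 1

lemma labelGraph_adj {u v : V} : (labelGraph b).Adj u v ↔ u ≠ v ∧ |b u - b v| ≤ 1 := by
  rw [labelGraph, fromRel_adj, abs_sub_comm (b v), or_self]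

lemma labelGraph_reachable_of_abs_sub_le_one {u v : V} (huv : |b u - b v| ≤ 1) :
    (labelGraph b).Reachable u v := by
  by_cases h : u = v
  · exact h ▸ Reachable.refl u
  · exact (labelGraph_adj.mpr ⟨h, huv⟩).reachable

lemma labelGraph_preconnected (hb : (Set.range b).OrdConnected) :
    (labelGraph b).Preconnected := by
  suffices h : ∀ x y, b x ≤ b y → (labelGraph b).Reachable x y from
    fun x y => (le_total (b x) (b y)).elim (h x y) fun hyx => (h y x hyx).symm
  intro x y hxy
  have climb : ∀ t, b x ≤ t → t ≤ b y → ∃ z, b z = t ∧ (labelGraph b).Reachable x z := by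
    intro t hxt
    induction t, hxt using Int.leInduction with
    | base => exact fun _ => ⟨x, rfl, Reachable.refl x⟩
    | succ t hxt ih =>
      intro hty
      obtain ⟨z, hz, hxz⟩ := ih (by omega)
      obtain ⟨z', hz'⟩ := hb.out ⟨x, rfl⟩ ⟨y, rfl⟩ ⟨by omega, hty⟩
      refine ⟨z', hz', hxz.trans (labelGraph_reachable_of_abs_sub_le_one ?_)⟩
      rw [hz, hz']
      norm_num
  obtain ⟨z, hz, hxz⟩ := climb (b y) hxy le_rfl
  exact hxz.trans (labelGraph_reachable_of_abs_sub_le_one (by simp [hz]))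

end SimpleGraph

theorem forest_completion_to_tree_general (V : Type)
    (F : SimpleGraph V) (hF : F.IsAcyclic) (b : V → ℤ) (h : ℕ) (hh : 1 ≤ h)
    (hrange : Set.range b = Set.Icc (1 : ℤ) (h : ℤ))
    (hedges : ∀ u v, F.Adj u v → |b u - b v| ≤ 1) :
    ∃ T : SimpleGraph V, F ≤ T ∧ T.IsTree ∧ ∀ u v, T.Adj u v → |b u - b v| ≤ 1 := by
  obtain ⟨v, -⟩ : (1 : ℤ) ∈ Set.range b := by
    rw [hrange]
    exact ⟨le_rfl, by exact_mod_cast hh⟩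
  have : Nonempty V := ⟨v⟩
  have hconn : (labelGraph b).Connected :=
    ⟨labelGraph_preconnected (hrange ▸ Set.ordConnected_Icc)⟩
  have hFle : F ≤ labelGraph b := fun u w huw => labelGraph_adj.mpr ⟨huw.ne, hedges u w huw⟩
  obtain ⟨T, hFT, hT, hTree⟩ := hconn.exists_isTree_le_of_le_of_isAcyclic hFle hF
  exact ⟨T, hFT, hTree, fun u w huw => (labelGraph_adj.mp (hT huw)).2⟩

/-- Let `F` be a forest (an acyclic simple graph) on a finite vertex
set `V` and let `b : V → ℤ` be a labeling whose image is exactly `{1, …, h}` for some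
`h ≥ 1`, such that `|b(u) - b(v)| ≤ 1` for every edge `{u, v}` of `F`.  Then edges
can be added to `F` so as to obtain a tree `T` on `V` containing `F` as a subgraph in
which every edge `{u, v}` still satisfies `|b(u) - b(v)| ≤ 1`. -/
theorem forest_completion_to_tree (V : Type) [Fintype V] [DecidableEq V]
    (F : SimpleGraph V) (hF : F.IsAcyclic) (b : V → ℤ) (h : ℕ) (hh : 1 ≤ h)
    (hrange : Set.range b = Set.Icc (1 : ℤ) (h : ℤ))
    (hedges : ∀ u v, F.Adj u v → |b u - b v| ≤ 1) :
    ∃ T : SimpleGraph V, F ≤ T ∧ T.IsTree ∧ ∀ u v, T.Adj u v → |b u - b v| ≤ 1 :=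
  forest_completion_to_tree_general V F hF b h hh hrange hedges
end

section
/- Let W be a positive integer, let F = T_1, …, T_k be a rooted ordered forest with m ≤ W vertices in total, and let φ be a ⌞-drawing of F. Then for each i ∈ {1, …, k}, all vertices of T_1, T_2, …, T_i are placed inside or on the boundary of the triangle delimited by the y-axis, the half-line ℓ(φ(r(T_i))) of slope −2 from the position of r(T_i), and the horizontal line y = 2W+2; explicitly, every vertex v of T_1 ∪ … ∪ T_i satisfies φ(v).x ≥ 0, φ(v).y ≥ 2W+2, and φ(v).y ≤ φ(r(T_i)).y − 2·φ(v).x. -/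
/-- A rooted ordered forest `T_1, …, T_k` on the finite vertex set `V`:
each vertex has an optional parent, the parent relation is well-founded (witnessed
by a depth function, so each tree is finite and rooted), the roots are enumerated in
order by `root : Fin k → V`, and `sib u v` expresses that `u` and `v` are children of
a common parent with `u` strictly to the left of `v` in the children order. -/
structure ROForest (V : Type) [Fintype V] (k : ℕ) where
  parent : V → Option V
  depth : V → ℕ
  depth_parent : ∀ v p, parent v = some p → depth v = depth p + 1
  root : Fin k → V
  root_parent : ∀ i, parent (root i) = none
  root_inj : Function.Injective root
  root_surj : ∀ v, parent v = none → ∃ i, root i = v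
  sib : V → V → Prop
  sib_sibling : ∀ u v, sib u v → ∃ p, parent u = some p ∧ parent v = some p
  sib_asymm : ∀ u v, sib u v → ¬ sib v u
  sib_total : ∀ p u v, parent u = some p → parent v = some p → u ≠ v → sib u v ∨ sib v u

variable {V : Type} [Fintype V] {k : ℕ}

/-- `v` belongs to the subtree rooted at `u`: from `v` one reaches `u` by repeatedly
passing to the parent. -/
def ROForest.inSubtree (F : ROForest V k) (u v : V) : Prop :=
  Relation.ReflTransGen (fun a b => F.parent a = some b) v u

/-- Cross product of two plane vectors. -/
def cross2 (p q : ℝ × ℝ) : ℝ := p.1 * q.2 - p.2 * q.1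

/-- The closed wedge `S(p)` at a point `p`, spanned by rotating the rightward
horizontal half-line at `p` clockwise until it overlaps the half-line `ℓ(p)` of
slope `-2`. -/
def wedgeS (p : ℝ × ℝ) : Set (ℝ × ℝ) :=
  {q | p.1 ≤ q.1 ∧ q.2 ≤ p.2 ∧ p.2 - 2 * (q.1 - p.1) ≤ q.2}

/-- The half-line `ℓ(p)` originating at `p` with slope `-2`, directed
rightward-downward. -/
def lineL (p : ℝ × ℝ) : Set (ℝ × ℝ) :=
  {q | p.1 ≤ q.1 ∧ q.2 = p.2 - 2 * (q.1 - p.1)}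

/-- The set of points of the plane covered by the drawing `φ` of the forest `F`:
all vertex points together with the closed segments of all (parent) edges. -/
def drawingSet (F : ROForest V k) (φ : V → ℝ × ℝ) : Set (ℝ × ℝ) :=
  Set.range φ ∪ ⋃ (u : V) (p : V) (_ : F.parent u = some p), segment ℝ (φ u) (φ p)

/-- `φ` is a ⌞-drawing of the rooted ordered forest `F = T_1, …, T_k` with window
size `W` (where `m = Fintype.card V ≤ W`): a planar straight-line strictly-upward
strictly-leftward order-preserving grid drawing such that
(i) it lies on the grid `[0, m-1] × [4W - 2m + 2, 4W]`;
(ii) the roots lie on the segment from `(0, 2W+2)` to `(0, 4W)` in this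
bottom-to-top order, with `r(T_k)` at `(0, 4W)`;
(iii) all vertices of `T_i` are strictly below all vertices of `T_{i+1}`;
(iv) for siblings `u` left of `u'`, the subtree of `u` is strictly below the
subtree of `u'`; and
(v) for each vertex `v`, the wedge `S(φ v)` meets the drawing only along `ℓ(φ v)`. -/
def IsLDrawing (W : ℕ) (F : ROForest V k) (φ : V → ℝ × ℝ) : Prop :=
  Function.Injective φ ∧
  -- planarity of the straight-line drawing:
  (∀ u p w, F.parent u = some p → w ≠ u → w ≠ p → φ w ∉ segment ℝ (φ u) (φ p)) ∧
  (∀ u p x q, F.parent u = some p → F.parent x = some q →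
    ({u, p} : Set V) ∩ {x, q} = ∅ →
    segment ℝ (φ u) (φ p) ∩ segment ℝ (φ x) (φ q) = ∅) ∧
  (∀ u p x q a, F.parent u = some p → F.parent x = some q →
    ({u, p} : Set V) ∩ {x, q} = {a} →
    segment ℝ (φ u) (φ p) ∩ segment ℝ (φ x) (φ q) = {φ a}) ∧
  -- strictly-upward and strictly-leftward:
  (∀ u p, F.parent u = some p → (φ u).2 < (φ p).2) ∧
  (∀ u p, F.parent u = some p → (φ p).1 < (φ u).1) ∧
  -- order-preserving: the edge towards a left sibling is to the left of the edge
  -- towards a right sibling (positive cross product of the downward edge vectors):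
  (∀ u u' p, F.parent u = some p → F.parent u' = some p → F.sib u u' →
    0 < cross2 (φ u - φ p) (φ u' - φ p)) ∧
  -- (i) grid drawing on [0, m-1] × [4W - 2m + 2, 4W]:
  (∀ v : V, ∃ x y : ℤ, φ v = ((x : ℝ), (y : ℝ)) ∧ 0 ≤ x ∧
    x ≤ (Fintype.card V : ℤ) - 1 ∧
    4 * (W : ℤ) - 2 * (Fintype.card V : ℤ) + 2 ≤ y ∧ y ≤ 4 * (W : ℤ)) ∧
  -- (ii) roots on the segment [(0, 2W+2), (0, 4W)], bottom-to-top, last at (0, 4W):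
  (∀ i : Fin k, (φ (F.root i)).1 = 0 ∧ 2 * (W : ℝ) + 2 ≤ (φ (F.root i)).2 ∧
    (φ (F.root i)).2 ≤ 4 * (W : ℝ)) ∧
  (∀ i j : Fin k, i < j → (φ (F.root i)).2 < (φ (F.root j)).2) ∧
  (∀ i : Fin k, (∀ j : Fin k, j ≤ i) → φ (F.root i) = ((0 : ℝ), (4 * (W : ℝ)))) ∧
  -- (iii) trees stacked bottom-to-top:
  (∀ i j : Fin k, i < j → ∀ u v, F.inSubtree (F.root i) u → F.inSubtree (F.root j) v →
    (φ u).2 < (φ v).2) ∧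
  -- (iv) subtrees of consecutive children stacked bottom-to-top:
  (∀ u u' p, F.parent u = some p → F.parent u' = some p → F.sib u u' →
    ∀ a c, F.inSubtree u a → F.inSubtree u' c → (φ a).2 < (φ c).2) ∧
  -- (v) the wedge of each vertex meets the drawing only along its half-line:
  (∀ v q, q ∈ wedgeS (φ v) → q ∈ drawingSet F φ → q ∈ lineL (φ v))

/-!
The first two bounds are read off the grid condition (i), since `4W - 2m + 2 ≥ 2W + 2`
when `m ≤ W`. For the slanted bound, a vertex `v` of `T_j` with `j ≤ i` lies weakly below
the root `r(T_i)` (by upwardness inside `T_i`, by condition (iii) otherwise) and weakly to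
its right, since the root is on the y-axis. So `φ v` is either below `ℓ(φ(r(T_i)))` already,
or it lies in the wedge `S(φ(r(T_i)))`, where condition (v) puts it on that half-line.
-/

lemma snd_le_of_wedgeS_inter_subset_lineL {D : Set (ℝ × ℝ)} {p q : ℝ × ℝ}
    (hD : ∀ r ∈ wedgeS p, r ∈ D → r ∈ lineL p) (hq : q ∈ D)
    (hx : p.1 ≤ q.1) (hy : q.2 ≤ p.2) :
    q.2 ≤ p.2 - 2 * (q.1 - p.1) := by
  rcases le_total (p.2 - 2 * (q.1 - p.1)) q.2 with hbelow | habove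
  · exact (hD q ⟨hx, hy, hbelow⟩ hq).2.le
  · exact habove

namespace IsLDrawing

variable {W : ℕ} {F : ROForest V k} {φ : V → ℝ × ℝ}

lemma fst_nonneg (hφ : IsLDrawing W F φ) (v : V) : 0 ≤ (φ v).1 := by
  obtain ⟨-, -, -, -, -, -, -, hgrid, -⟩ := hφ
  obtain ⟨x, y, hxy, hx, -⟩ := hgrid v
  rw [hxy]
  exact Int.cast_nonneg hx

lemma two_mul_add_two_le_snd (hφ : IsLDrawing W F φ) (hm : Fintype.card V ≤ W) (v : V) :
    2 * (W : ℝ) + 2 ≤ (φ v).2 := by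
  obtain ⟨-, -, -, -, -, -, -, hgrid, -⟩ := hφ
  obtain ⟨x, y, hxy, -, -, hy, -⟩ := hgrid v
  have : 2 * (W : ℤ) + 2 ≤ y := by omega
  rw [hxy]
  dsimp only
  exact_mod_cast this

lemma snd_le_of_inSubtree (hφ : IsLDrawing W F φ) {u v : V} (huv : F.inSubtree u v) :
    (φ v).2 ≤ (φ u).2 := by
  obtain ⟨-, -, -, -, hup, -⟩ := hφ
  induction huv with
  | refl => exact le_rfl
  | tail _ hparent ih => exact ih.trans (hup _ _ hparent).le

lemma snd_le_snd_root (hφ : IsLDrawing W F φ) {i j : Fin k} (hji : j ≤ i) {v : V}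
    (hv : F.inSubtree (F.root j) v) : (φ v).2 ≤ (φ (F.root i)).2 := by
  rcases hji.lt_or_eq with hlt | rfl
  · obtain ⟨-, -, -, -, -, -, -, -, -, -, -, hstack, -⟩ := hφ
    exact (hstack j i hlt v (F.root i) hv .refl).le
  · exact hφ.snd_le_of_inSubtree hv

lemma root_fst (hφ : IsLDrawing W F φ) (i : Fin k) : (φ (F.root i)).1 = 0 := by
  obtain ⟨-, -, -, -, -, -, -, -, hroots, -⟩ := hφ
  exact (hroots i).1

lemma snd_le_of_fst_le_of_snd_le (hφ : IsLDrawing W F φ) {u v : V}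
    (hx : (φ u).1 ≤ (φ v).1) (hy : (φ v).2 ≤ (φ u).2) :
    (φ v).2 ≤ (φ u).2 - 2 * ((φ v).1 - (φ u).1) := by
  obtain ⟨-, -, -, -, -, -, -, -, -, -, -, -, -, hwedge⟩ := hφ
  exact snd_le_of_wedgeS_inter_subset_lineL (hwedge u) (Or.inl ⟨v, rfl⟩) hx hy

end IsLDrawing

theorem lDrawing_inside_triangle_general (W : ℕ) (F : ROForest V k)
    (hm : Fintype.card V ≤ W) (φ : V → ℝ × ℝ) (hφ : IsLDrawing W F φ) :
    ∀ i j : Fin k, j ≤ i → ∀ v, F.inSubtree (F.root j) v →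
      0 ≤ (φ v).1 ∧ 2 * (W : ℝ) + 2 ≤ (φ v).2 ∧
      (φ v).2 ≤ (φ (F.root i)).2 - 2 * (φ v).1 := by
  intro i j hji v hv
  refine ⟨hφ.fst_nonneg v, hφ.two_mul_add_two_le_snd hm v, ?_⟩
  have key := hφ.snd_le_of_fst_le_of_snd_le (u := F.root i)
    (hφ.root_fst i ▸ hφ.fst_nonneg v) (hφ.snd_le_snd_root hji hv)
  rwa [hφ.root_fst i, sub_zero] at key

/-- In any ⌞-drawing `φ` of a rooted ordered forest
`F = T_1, …, T_k` with `m ≤ W` vertices in total, for each `i`, all vertices of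
`T_1, …, T_i` lie inside or on the boundary of the triangle delimited by the y-axis,
the half-line `ℓ(φ(r(T_i)))` of slope `-2`, and the horizontal line `y = 2W + 2`:
every vertex `v` of `T_1 ∪ … ∪ T_i` satisfies `φ(v).x ≥ 0`, `φ(v).y ≥ 2W + 2` and
`φ(v).y ≤ φ(r(T_i)).y - 2 φ(v).x`. -/
theorem lDrawing_inside_triangle (W : ℕ) (hW : 0 < W) (F : ROForest V k)
    (hm : Fintype.card V ≤ W) (φ : V → ℝ × ℝ) (hφ : IsLDrawing W F φ) :
    ∀ i j : Fin k, j ≤ i → ∀ v, F.inSubtree (F.root j) v →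
      0 ≤ (φ v).1 ∧ 2 * (W : ℝ) + 2 ≤ (φ v).2 ∧
      (φ v).2 ≤ (φ (F.root i)).2 - 2 * (φ v).1 :=
  lDrawing_inside_triangle_general W F hm φ hφ
end
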